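/- arXiv:1203.6201 — 10 statements merged into one kernel-verified Lean document; each statement's English description precedes it below -/
import Mathlib

section
/- Let r ≥ 1 and let n₁, …, n_r be positive integers. The number of cyclic subgroups of the direct product C_{n₁} × ⋯ × C_{n_r} of cyclic groups equals the sum, over all r-tuples (d₁, …, d_r) with d_i dividing n_i for each i, of φ(d₁)⋯φ(d_r)/φ(lcm(d₁, …, d_r)), where φ is Euler's totient function. (Each summand is an integer-valued rational; the identity holds in ℚ.) -/
/-!
A cyclic subgroup `H` has exactly `φ |H|` generators, so weighting every element `x` by
`1 / φ (ord x)` counts each cyclic subgroup exactly once. In `∏ i, C_{n i}` the order of `x` is the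
lcm of the orders `d i` of its coordinates, and since `C_{n i}` has `φ d` elements of order `d`
for each `d ∣ n i`, exactly `∏ i, φ (d i)` elements have coordinate orders `d`.
-/

open Finset

open Nat (totient)

section CyclicSubgroups

variable {G : Type*} [Group G]

@[to_additive]
theorem Subgroup.zpowers_eq_iff_mem_and_orderOf_eq_natCard {H : Subgroup G} [Finite H] {x : G} :
    zpowers x = H ↔ x ∈ H ∧ orderOf x = Nat.card H := by
  constructor
  · rintro rfl
    exact ⟨mem_zpowers x, (Nat.card_zpowers x).symm⟩
  · rintro ⟨hx, hord⟩
    exact eq_of_le_of_card_ge (zpowers_le.mpr hx) (by rw [Nat.card_zpowers, hord])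

@[to_additive]
theorem Subgroup.natCard_generators_eq_totient (H : Subgroup G) [IsCyclic H] [Finite H] :
    Nat.card {x : G // zpowers x = H} = totient (Nat.card H) := by
  have : Fintype H := Fintype.ofFinite H
  have generators_equiv : {y : H // orderOf y = Nat.card H} ≃ {x : G // zpowers x = H} :=
    (Equiv.subtypeEquivRight fun y => by rw [orderOf_coe]).trans <|
      (Equiv.subtypeSubtypeEquivSubtypeInter (· ∈ H) (orderOf · = Nat.card H)).trans <|
        Equiv.subtypeEquivRight fun x => zpowers_eq_iff_mem_and_orderOf_eq_natCard.symm
  rw [← Nat.card_congr generators_equiv, Nat.card_eq_fintype_card, Fintype.card_subtype,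
    Nat.card_eq_fintype_card, IsCyclic.card_orderOf_eq_totient dvd_rfl]

@[to_additive natCard_isAddCyclic_addSubgroups_eq_sum_inv_totient_addOrderOf]
theorem natCard_isCyclic_subgroups_eq_sum_inv_totient_orderOf [Fintype G] :
    (Nat.card {H : Subgroup G // IsCyclic H} : ℚ) = ∑ x : G, ((orderOf x).totient : ℚ)⁻¹ := by
  classical
  have : Fintype (Subgroup G) := Fintype.ofFinite _
  let generated (x : G) : {H : Subgroup G // IsCyclic H} := ⟨Subgroup.zpowers x, inferInstance⟩
  have fiber_card (H : {H : Subgroup G // IsCyclic H}) :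
      Fintype.card {x // generated x = H} = totient (Nat.card H.1) := by
    have := H.2
    rw [← Nat.card_eq_fintype_card, ← Subgroup.natCard_generators_eq_totient]
    exact Nat.card_congr (Equiv.subtypeEquivRight fun x => Subtype.ext_iff)
  calc (Nat.card {H : Subgroup G // IsCyclic H} : ℚ)
      = ∑ H : {H : Subgroup G // IsCyclic H}, ∑ _x : {x // generated x = H},
          (totient (Nat.card H.1) : ℚ)⁻¹ := by
        rw [Nat.card_eq_fintype_card, Fintype.card_eq_sum_ones, Nat.cast_sum]
        refine sum_congr rfl fun H _ => ?_
        have := (Nat.totient_pos.mpr (Nat.card_pos (α := H.1))).ne'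
        rw [sum_const, card_univ, fiber_card, nsmul_eq_mul, Nat.cast_one, mul_inv_cancel₀]
        exact_mod_cast this
    _ = ∑ x : G, ((orderOf x).totient : ℚ)⁻¹ := by
        rw [Fintype.sum_fiberwise' generated fun H => (totient (Nat.card H.1) : ℚ)⁻¹]
        simp only [generated, Nat.card_zpowers]

end CyclicSubgroups

@[to_additive card_filter_addOrderOf_apply_eq_prod_totient]
theorem card_filter_orderOf_apply_eq_prod_totient {ι : Type*} [Fintype ι] [DecidableEq ι]
    {G : ι → Type*} [∀ i, Group (G i)] [∀ i, Fintype (G i)] [∀ i, IsCyclic (G i)]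
    {d : ι → ℕ} (hd : ∀ i, d i ∣ Fintype.card (G i)) :
    #{x : ∀ i, G i | ∀ i, orderOf (x i) = d i} = ∏ i, totient (d i) := by
  have filter_eq_piFinset : ({x : ∀ i, G i | ∀ i, orderOf (x i) = d i} : Finset _) =
      Fintype.piFinset fun i => {a : G i | orderOf a = d i} := by
    ext x
    simp
  rw [filter_eq_piFinset, Fintype.card_piFinset]
  exact prod_congr rfl fun i _ => IsCyclic.card_orderOf_eq_totient (hd i)

theorem number_of_cyclic_subgroups_general (r : ℕ) (n : Fin r → ℕ)
    (hn : ∀ i, 0 < n i) :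
    (Nat.card {H : AddSubgroup (∀ i, ZMod (n i)) // IsAddCyclic H} : ℚ) =
      ∑ d ∈ Fintype.piFinset (fun i => (n i).divisors),
        (∏ i, (Nat.totient (d i) : ℚ)) / (Nat.totient (Finset.univ.lcm d) : ℚ) := by
  have : ∀ i, NeZero (n i) := fun i => ⟨(hn i).ne'⟩
  have orders_mem (x : ∀ i, ZMod (n i)) :
      (fun i => addOrderOf (x i)) ∈ Fintype.piFinset fun i => (n i).divisors := by
    simp only [Fintype.mem_piFinset, Nat.mem_divisors]
    exact fun i => ⟨by simpa using addOrderOf_dvd_card (x := x i), (hn i).ne'⟩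
  rw [natCard_isAddCyclic_addSubgroups_eq_sum_inv_totient_addOrderOf]
  simp_rw [Pi.addOrderOf]
  rw [← sum_fiberwise_of_maps_to' (fun x _ => orders_mem x) fun d => (totient (univ.lcm d) : ℚ)⁻¹]
  refine sum_congr rfl fun d hd => ?_
  simp only [Fintype.mem_piFinset, Nat.mem_divisors] at hd
  have fiber_card :
      #{x : ∀ i, ZMod (n i) | (fun i => addOrderOf (x i)) = d} = ∏ i, totient (d i) := by
    simp only [funext_iff]
    convert card_filter_addOrderOf_apply_eq_prod_totient fun i => (ZMod.card (n i)).symm ▸ (hd i).1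
  rw [sum_const, fiber_card, nsmul_eq_mul, Nat.cast_prod, div_eq_mul_inv]

theorem number_of_cyclic_subgroups (r : ℕ) (hr : 1 ≤ r) (n : Fin r → ℕ)
    (hn : ∀ i, 0 < n i) :
    (Nat.card {H : AddSubgroup (∀ i, ZMod (n i)) // IsAddCyclic H} : ℚ) =
      ∑ d ∈ Fintype.piFinset (fun i => (n i).divisors),
        (∏ i, (Nat.totient (d i) : ℚ)) / (Nat.totient (Finset.univ.lcm d) : ℚ) :=
  number_of_cyclic_subgroups_general r n hn
end

section
/- Let n₁, n₂ be positive integers. The number of cyclic subgroups of C_{n₁} × C_{n₂} equals the sum, over all pairs (d₁, d₂) with d₁ ∣ n₁ and d₂ ∣ n₂, of φ(gcd(d₁, d₂)). -/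
/-!
A cyclic subgroup `H` has exactly `φ |H|` generators, each of order `|H|`, so a finite group has
`∑ g, 1 / φ (ord g)` cyclic subgroups. In `C_{n₁} × C_{n₂}` the order of `(a, b)` is
`lcm (ord a) (ord b)`, and `C_n` has `φ d` elements of order `d` for each `d ∣ n`; the sum becomes
`∑ φ d₁ φ d₂ / φ (lcm d₁ d₂)` over `d₁ ∣ n₁, d₂ ∣ n₂`, and
`φ d₁ φ d₂ = φ (gcd d₁ d₂) φ (lcm d₁ d₂)`.
-/

open Finset

namespace Nat

theorem totient_gcd_mul_totient_lcm (a b : ℕ) :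
    φ (a.gcd b) * φ (a.lcm b) = φ a * φ b := by
  rcases eq_zero_or_pos (a.gcd b) with hg | hg
  · obtain ⟨rfl, rfl⟩ := gcd_eq_zero_iff.1 hg
    simp
  · -- the pairs `(a, b)` and `(gcd a b, lcm a b)` have the same gcd and the same product
    have hab := totient_gcd_mul_totient_mul a b
    have hgl := totient_gcd_mul_totient_mul (a.gcd b) (a.lcm b)
    rw [gcd_eq_left ((gcd_dvd_left a b).trans (dvd_lcm_left a b)),
      gcd_mul_lcm] at hgl
    exact eq_of_mul_eq_mul_right hg (hgl.symm.trans hab)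

end Nat

section CyclicSubgroups

variable {G : Type*} [AddGroup G]

theorem AddSubgroup.zmultiples_eq_iff {H : AddSubgroup G} [Finite H] {g : G} :
    AddSubgroup.zmultiples g = H ↔ g ∈ H ∧ addOrderOf g = Nat.card H := by
  constructor
  · rintro rfl
    exact ⟨AddSubgroup.mem_zmultiples g, (Nat.card_zmultiples g).symm⟩
  · rintro ⟨hg, hord⟩
    exact AddSubgroup.eq_of_le_of_card_ge (AddSubgroup.zmultiples_le_of_mem hg)
      (by rw [Nat.card_zmultiples, hord])

theorem AddSubgroup.card_generators {H : AddSubgroup G} [Finite H] (hH : IsAddCyclic H) :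
    Nat.card {g : G // AddSubgroup.zmultiples g = H} = (Nat.card H).totient := by
  classical
  have : Fintype H := Fintype.ofFinite H
  calc Nat.card {g : G // AddSubgroup.zmultiples g = H}
      = Nat.card {g : G // g ∈ H ∧ addOrderOf g = Nat.card H} :=
        Nat.card_congr (Equiv.subtypeEquivRight fun _ => AddSubgroup.zmultiples_eq_iff)
    _ = Nat.card {a : H // addOrderOf a = Nat.card H} :=
        Nat.card_congr ((Equiv.subtypeSubtypeEquivSubtypeInter (· ∈ H) _).symm.trans
          (Equiv.subtypeEquivRight fun a => by rw [AddSubgroup.addOrderOf_coe]))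
    _ = (Nat.card H).totient := by
        rw [Nat.card_eq_fintype_card, Fintype.card_subtype, Nat.card_eq_fintype_card,
          IsAddCyclic.card_addOrderOf_eq_totient dvd_rfl]

theorem card_isAddCyclic_addSubgroup_eq_sum_inv_totient [Fintype G] :
    (Nat.card {H : AddSubgroup G // IsAddCyclic H} : ℚ) =
      ∑ g : G, ((addOrderOf g).totient : ℚ)⁻¹ := by
  classical
  have : Fintype (AddSubgroup G) := .ofFinite _
  have fiber : ∀ H ∈ (univ.filter fun H : AddSubgroup G => IsAddCyclic H),
      ∑ g with AddSubgroup.zmultiples g = H, ((addOrderOf g).totient : ℚ)⁻¹ = 1 := by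
    intro H hH
    have hφ : ((Nat.card H).totient : ℚ) ≠ 0 := by
      exact_mod_cast (Nat.totient_pos.2 Nat.card_pos).ne'
    calc ∑ g with AddSubgroup.zmultiples g = H, ((addOrderOf g).totient : ℚ)⁻¹
        = ∑ g with AddSubgroup.zmultiples g = H, ((Nat.card H).totient : ℚ)⁻¹ :=
          sum_congr rfl fun g hg => by rw [← (mem_filter.1 hg).2, Nat.card_zmultiples]
      _ = 1 := by
          rw [sum_const, nsmul_eq_mul, ← Fintype.card_subtype, ← Nat.card_eq_fintype_card,
            AddSubgroup.card_generators (mem_filter.1 hH).2, mul_inv_cancel₀ hφ]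
  rw [← sum_fiberwise_of_maps_to (t := univ.filter fun H : AddSubgroup G => IsAddCyclic H)
      (g := AddSubgroup.zmultiples)
      fun g _ => mem_filter.2 ⟨mem_univ _, AddSubgroup.isAddCyclic_zmultiples g⟩,
    sum_congr rfl fiber, Nat.card_eq_fintype_card, Fintype.card_subtype]
  simp

theorem IsAddCyclic.sum_addOrderOf [Fintype G] [IsAddCyclic G] {M : Type*} [AddCommMonoid M]
    (f : ℕ → M) :
    ∑ a : G, f (addOrderOf a) = ∑ d ∈ (Fintype.card G).divisors, d.totient • f d := by
  classical
  rw [← sum_fiberwise_of_maps_to (g := addOrderOf) fun a _ =>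
    Nat.mem_divisors.2 ⟨addOrderOf_dvd_card, Fintype.card_ne_zero⟩]
  refine sum_congr rfl fun d hd => ?_
  rw [sum_congr rfl fun a ha => by rw [(mem_filter.1 ha).2], sum_const,
    IsAddCyclic.card_addOrderOf_eq_totient (Nat.dvd_of_mem_divisors hd)]

theorem IsAddCyclic.sum_prod_addOrderOf [Fintype G] [IsAddCyclic G] {K : Type*} [AddGroup K]
    [Fintype K] [IsAddCyclic K] {R : Type*} [CommSemiring R] (f : ℕ → ℕ → R) :
    ∑ x : G × K, f (addOrderOf x.1) (addOrderOf x.2) =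
      ∑ d₁ ∈ (Fintype.card G).divisors, ∑ d₂ ∈ (Fintype.card K).divisors,
        (d₁.totient * d₂.totient : R) * f d₁ d₂ := by
  calc ∑ x : G × K, f (addOrderOf x.1) (addOrderOf x.2)
      = ∑ a : G, ∑ d₂ ∈ (Fintype.card K).divisors, d₂.totient • f (addOrderOf a) d₂ := by
        rw [Fintype.sum_prod_type]
        exact Fintype.sum_congr _ _ fun a => IsAddCyclic.sum_addOrderOf (f (addOrderOf a))
    _ = ∑ d₂ ∈ (Fintype.card K).divisors,
          d₂.totient • ∑ d₁ ∈ (Fintype.card G).divisors, d₁.totient • f d₁ d₂ := by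
        rw [sum_comm]
        refine sum_congr rfl fun d₂ _ => ?_
        rw [← smul_sum, IsAddCyclic.sum_addOrderOf (fun d₁ => f d₁ d₂)]
    _ = _ := by
        rw [sum_comm]
        simp only [smul_sum, nsmul_eq_mul]
        exact sum_congr rfl fun _ _ => sum_congr rfl fun _ _ => by ring

end CyclicSubgroups

theorem number_of_cyclic_subgroups_two (n₁ n₂ : ℕ) (h₁ : 0 < n₁) (h₂ : 0 < n₂) :
    Nat.card {H : AddSubgroup (ZMod n₁ × ZMod n₂) // IsAddCyclic H} =
      ∑ d₁ ∈ n₁.divisors, ∑ d₂ ∈ n₂.divisors, Nat.totient (Nat.gcd d₁ d₂) := by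
  have : NeZero n₁ := ⟨h₁.ne'⟩
  have : NeZero n₂ := ⟨h₂.ne'⟩
  suffices (Nat.card {H : AddSubgroup (ZMod n₁ × ZMod n₂) // IsAddCyclic H} : ℚ) =
      ∑ d₁ ∈ n₁.divisors, ∑ d₂ ∈ n₂.divisors, ((Nat.gcd d₁ d₂).totient : ℚ) by
    exact_mod_cast this
  simp only [card_isAddCyclic_addSubgroup_eq_sum_inv_totient, Prod.addOrderOf]
  rw [IsAddCyclic.sum_prod_addOrderOf fun d₁ d₂ => ((d₁.lcm d₂).totient : ℚ)⁻¹, ZMod.card,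
    ZMod.card]
  refine sum_congr rfl fun d₁ hd₁ => sum_congr rfl fun d₂ hd₂ => ?_
  have hlcm : ((d₁.lcm d₂).totient : ℚ) ≠ 0 := by
    exact_mod_cast (Nat.totient_pos.2 (Nat.lcm_pos (Nat.pos_of_mem_divisors hd₁)
      (Nat.pos_of_mem_divisors hd₂))).ne'
  rw [eq_comm, eq_mul_inv_iff_mul_eq₀ hlcm]
  exact_mod_cast Nat.totient_gcd_mul_totient_lcm d₁ d₂
end

section
/- Let r ≥ 1, let n₁, …, n_r be positive integers, set n = lcm(n₁, …, n_r), and let δ be a positive divisor of n. The number of elements of order δ in C_{n₁} × ⋯ × C_{n_r} equals ∑_{e ∣ δ} μ(δ/e) · gcd(e, n₁) ⋯ gcd(e, n_r), where μ is the Möbius function. (The identity holds in ℤ.) -/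
/-!
Every element killed by `e` has order dividing `e`, so summing the number of elements of order `d`
over `d ∣ e` counts the solutions of `e • x = 0`; Möbius inversion recovers the number of elements
of order `δ`. In `C_{n₁} × ⋯ × C_{n_r}` the equation `e • x = 0` splits coordinatewise, and in
the cyclic group `C_m` it has exactly `gcd(m, e)` solutions.
-/

open Finset

section OrderCount

variable {G : Type*} [AddMonoid G] [Finite G]

theorem sum_card_addOrderOf_eq_card_nsmul_eq_zero' {e : ℕ} (he : e ≠ 0) :
    ∑ d ∈ e.divisors, Nat.card {x : G // addOrderOf x = d} = Nat.card {x : G // e • x = 0} := by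
  classical
  have := Fintype.ofFinite G
  simp only [Nat.card_eq_fintype_card, Fintype.card_subtype]
  exact sum_card_addOrderOf_eq_card_nsmul_eq_zero he

theorem card_addOrderOf_eq_sum_moebius_mul {δ : ℕ} (hδ : 0 < δ) :
    (Nat.card {x : G // addOrderOf x = δ} : ℤ) =
      ∑ e ∈ δ.divisors,
        ArithmeticFunction.moebius (δ / e) * (Nat.card {x : G // e • x = 0} : ℤ) := by
  have hsum : ∀ e > 0, ∑ d ∈ e.divisors, (Nat.card {x : G // addOrderOf x = d} : ℤ) =
      Nat.card {x : G // e • x = 0} := fun e he => by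
    exact_mod_cast sum_card_addOrderOf_eq_card_nsmul_eq_zero' (G := G) he.ne'
  rw [← ArithmeticFunction.sum_eq_iff_sum_mul_moebius_eq.mp hsum δ hδ]
  simp only [Int.cast_id]
  exact Nat.sum_divisorsAntidiagonal' fun a b =>
    (ArithmeticFunction.moebius a : ℤ) * Nat.card {x : G // b • x = 0}

end OrderCount

theorem IsAddCyclic.card_nsmul_eq_zero {G : Type*} [AddCommGroup G] [IsAddCyclic G] [Finite G]
    (e : ℕ) : Nat.card {x : G // e • x = 0} = (Nat.card G).gcd e :=
  IsAddCyclic.card_nsmulAddMonoidHom_ker G e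

theorem Pi.card_nsmul_eq_zero {ι : Type*} [Fintype ι] {G : ι → Type*} [∀ i, AddMonoid (G i)]
    (e : ℕ) : Nat.card {x : ∀ i, G i // e • x = 0} = ∏ i, Nat.card {y : G i // e • y = 0} := by
  rw [← Nat.card_pi]
  exact Nat.card_congr <|
    (Equiv.subtypeEquivRight fun x => by simp [funext_iff]).trans Equiv.subtypePiEquivPi

theorem number_of_elements_of_order_delta_general (r : ℕ) (n : Fin r → ℕ)
    (hn : ∀ i, 0 < n i) (δ : ℕ) (hδ : 0 < δ) :
    (Nat.card {x : ∀ i, ZMod (n i) // addOrderOf x = δ} : ℤ) =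
      ∑ e ∈ δ.divisors,
        ArithmeticFunction.moebius (δ / e) * ∏ i, (Nat.gcd e (n i) : ℤ) := by
  have : ∀ i, NeZero (n i) := fun i => ⟨(hn i).ne'⟩
  rw [card_addOrderOf_eq_sum_moebius_mul hδ]
  refine sum_congr rfl fun e _ => ?_
  rw [Pi.card_nsmul_eq_zero]
  push_cast
  congr 1
  refine prod_congr rfl fun i _ => ?_
  rw [IsAddCyclic.card_nsmul_eq_zero, Nat.card_zmod, Nat.gcd_comm]

theorem number_of_elements_of_order_delta (r : ℕ) (hr : 1 ≤ r) (n : Fin r → ℕ)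
    (hn : ∀ i, 0 < n i) (δ : ℕ) (hδ : 0 < δ) (hδn : δ ∣ Finset.univ.lcm n) :
    (Nat.card {x : ∀ i, ZMod (n i) // addOrderOf x = δ} : ℤ) =
      ∑ e ∈ δ.divisors,
        ArithmeticFunction.moebius (δ / e) * ∏ i, (Nat.gcd e (n i) : ℤ) :=
  number_of_elements_of_order_delta_general r n hn δ hδ
end

section
/- Let p be a prime, let r ≥ 1 and a₁, …, a_r ≥ 1, and let ν satisfy 1 ≤ ν ≤ max(a₁, …, a_r). The number of cyclic subgroups of order p^ν of C_{p^{a₁}} × ⋯ × C_{p^{a_r}} equals ( p^{min(ν,a₁)+⋯+min(ν,a_r)} − p^{min(ν−1,a₁)+⋯+min(ν−1,a_r)} ) / ( p^{ν−1}(p−1) ). -/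
/-!
Every element of order `p ^ ν` generates a cyclic subgroup of order `p ^ ν`, and each such
subgroup has exactly `φ (p ^ ν) = p ^ (ν - 1) * (p - 1)` generators, so the left-hand side counts
the elements of order `p ^ ν`. These are the elements killed by `p ^ ν` but not by `p ^ (ν - 1)`,
and in a product of cyclic groups of orders `p ^ aᵢ` the elements killed by `p ^ m` number
`∏ gcd (p ^ aᵢ, p ^ m) = p ^ ∑ min m aᵢ`.
-/

open Finset

theorem Nat.gcd_pow_pow (b m n : ℕ) : Nat.gcd (b ^ m) (b ^ n) = b ^ min m n := by
  rcases le_total m n with h | h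
  · rw [min_eq_left h, Nat.gcd_eq_left (pow_dvd_pow b h)]
  · rw [min_eq_right h, Nat.gcd_eq_right (pow_dvd_pow b h)]

theorem Nat.dvd_prime_pow_succ_iff {p d : ℕ} (hp : p.Prime) (n : ℕ) :
    d ∣ p ^ (n + 1) ↔ d ∣ p ^ n ∨ d = p ^ (n + 1) := by
  refine ⟨fun h => ?_, ?_⟩
  · obtain ⟨k, hk, rfl⟩ := (Nat.dvd_prime_pow hp).mp h
    rcases hk.lt_or_eq with hlt | rfl
    · exact Or.inl (pow_dvd_pow p (Nat.le_of_lt_succ hlt))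
    · exact Or.inr rfl
  · rintro (h | rfl)
    · exact h.trans (pow_dvd_pow p n.le_succ)
    · exact dvd_rfl

section OrderCount

variable {G : Type*} [AddGroup G] [Finite G]

theorem AddSubgroup.zmultiples_eq_iff_mem {x : G} {H : AddSubgroup G}
    (h : Nat.card H = addOrderOf x) : AddSubgroup.zmultiples x = H ↔ x ∈ H := by
  refine ⟨fun hx => hx ▸ AddSubgroup.mem_zmultiples x, fun hx => ?_⟩
  exact AddSubgroup.eq_of_le_of_card_ge (AddSubgroup.zmultiples_le_of_mem hx)
    (by rw [Nat.card_zmultiples, h])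

theorem AddSubgroup.card_generators_eq_totient (H : AddSubgroup G) [IsAddCyclic H] :
    Nat.card {x : G // addOrderOf x = Nat.card H ∧ AddSubgroup.zmultiples x = H} =
      (Nat.card H).totient := by
  classical
  have : Fintype H := Fintype.ofFinite H
  calc Nat.card {x : G // addOrderOf x = Nat.card H ∧ AddSubgroup.zmultiples x = H}
      = Nat.card {y : H // addOrderOf (y : G) = Nat.card H} := by
        refine Nat.card_congr ((Equiv.subtypeEquivRight fun x => ?_).trans
          (Equiv.subtypeSubtypeEquivSubtypeInter (· ∈ H) (addOrderOf · = Nat.card H)).symm)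
        constructor
        · rintro ⟨hx, hH⟩
          exact ⟨(AddSubgroup.zmultiples_eq_iff_mem hx.symm).mp hH, hx⟩
        · rintro ⟨hH, hx⟩
          exact ⟨hx, (AddSubgroup.zmultiples_eq_iff_mem hx.symm).mpr hH⟩
    _ = (Nat.card H).totient := by
        simp only [AddSubgroup.addOrderOf_coe, Nat.card_eq_fintype_card, Fintype.card_subtype]
        exact IsAddCyclic.card_addOrderOf_eq_totient dvd_rfl

theorem card_addOrderOf_eq_eq_card_cyclic_mul_totient (d : ℕ) :
    Nat.card {x : G // addOrderOf x = d} =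
      Nat.card {H : AddSubgroup G // IsAddCyclic H ∧ Nat.card H = d} * d.totient := by
  classical
  let C := {H : AddSubgroup G // IsAddCyclic H ∧ Nat.card H = d}
  have : Fintype C := Fintype.ofFinite C
  let span : {x : G // addOrderOf x = d} → C := fun x =>
    ⟨AddSubgroup.zmultiples x, inferInstance, by rw [Nat.card_zmultiples, x.2]⟩
  have hfiber : ∀ H : C, Nat.card {x // span x = H} = d.totient := by
    rintro ⟨H, hcyc, rfl⟩
    rw [← AddSubgroup.card_generators_eq_totient H]
    exact Nat.card_congr ((Equiv.subtypeEquivRight fun x => Subtype.ext_iff).trans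
      (Equiv.subtypeSubtypeEquivSubtypeInter _ (AddSubgroup.zmultiples · = H)))
  rw [← Nat.card_congr (Equiv.sigmaFiberEquiv span), Nat.card_sigma,
    sum_congr rfl fun H _ => hfiber H, sum_const, card_univ, smul_eq_mul, Nat.card_eq_fintype_card]

theorem card_nsmul_prime_pow_succ_eq_zero {p : ℕ} (hp : p.Prime) (n : ℕ) :
    Nat.card {x : G // p ^ (n + 1) • x = 0} =
      Nat.card {x : G // p ^ n • x = 0} + Nat.card {x : G // addOrderOf x = p ^ (n + 1)} := by
  classical
  have hdisj : Disjoint (fun x : G => p ^ n • x = 0) (fun x => addOrderOf x = p ^ (n + 1)) := by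
    refine Pi.disjoint_iff.mpr fun x => Prop.disjoint_iff.mpr fun ⟨hx, hord⟩ => ?_
    rw [← addOrderOf_dvd_iff_nsmul_eq_zero, hord, Nat.pow_dvd_pow_iff_le_right hp.one_lt] at hx
    omega
  rw [← Nat.card_sum, ← Nat.card_congr (subtypeOrEquiv _ _ hdisj)]
  refine Nat.card_congr (Equiv.subtypeEquivRight fun x => ?_)
  simp only [← addOrderOf_dvd_iff_nsmul_eq_zero, Nat.dvd_prime_pow_succ_iff hp]

end OrderCount

theorem card_pi_nsmul_eq_zero {ι : Type*} [Fintype ι] {G : ι → Type*}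
    [∀ i, AddCommGroup (G i)] [∀ i, IsAddCyclic (G i)] [∀ i, Finite (G i)] (k : ℕ) :
    Nat.card {x : ∀ i, G i // k • x = 0} = ∏ i, Nat.gcd (Nat.card (G i)) k := by
  have e : {x : ∀ i, G i // k • x = 0} ≃ ∀ i, (nsmulAddMonoidHom k : G i →+ G i).ker :=
    (Equiv.subtypeEquivRight fun x => by simp [funext_iff]).trans Equiv.subtypePiEquivPi
  rw [Nat.card_congr e, Nat.card_pi]
  exact Finset.prod_congr rfl fun i _ => IsAddCyclic.card_nsmulAddMonoidHom_ker (G i) k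

theorem card_nsmul_pow_eq_zero_pi_zmod {p : ℕ} (hp : p ≠ 0) {ι : Type*} [Fintype ι]
    (a : ι → ℕ) (m : ℕ) :
    Nat.card {x : ∀ i, ZMod (p ^ a i) // p ^ m • x = 0} = p ^ ∑ i, min m (a i) := by
  have : ∀ i, NeZero (p ^ a i) := fun i => ⟨pow_ne_zero _ hp⟩
  simp only [card_pi_nsmul_eq_zero, Nat.card_zmod, Nat.gcd_pow_pow, min_comm, prod_pow_eq_pow_sum]

theorem number_of_cyclic_subgroups_p_group_general (p : ℕ) (hp : p.Prime)
    (r : ℕ) (a : Fin r → ℕ) (ν : ℕ) (hν₁ : 1 ≤ ν) :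
    p ^ (ν - 1) * (p - 1) *
        Nat.card {H : AddSubgroup (∀ i, ZMod (p ^ a i)) //
          IsAddCyclic H ∧ Nat.card H = p ^ ν} =
      p ^ (∑ i, min ν (a i)) - p ^ (∑ i, min (ν - 1) (a i)) := by
  obtain ⟨n, rfl⟩ := Nat.exists_eq_add_of_le' hν₁
  have : ∀ i, NeZero (p ^ a i) := fun i => ⟨pow_ne_zero _ hp.ne_zero⟩
  rw [← card_nsmul_pow_eq_zero_pi_zmod hp.ne_zero, ← card_nsmul_pow_eq_zero_pi_zmod hp.ne_zero,
    card_nsmul_prime_pow_succ_eq_zero hp, Nat.add_sub_cancel, Nat.add_sub_cancel_left,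
    card_addOrderOf_eq_eq_card_cyclic_mul_totient, Nat.totient_prime_pow_succ hp, mul_comm]

theorem number_of_cyclic_subgroups_p_group (p : ℕ) (hp : p.Prime) (r : ℕ) (hr : 1 ≤ r)
    (a : Fin r → ℕ) (ha : ∀ i, 1 ≤ a i) (ν : ℕ) (hν₁ : 1 ≤ ν)
    (hν₂ : ν ≤ Finset.univ.sup a) :
    p ^ (ν - 1) * (p - 1) *
        Nat.card {H : AddSubgroup (∀ i, ZMod (p ^ a i)) //
          IsAddCyclic H ∧ Nat.card H = p ^ ν} =
      p ^ (∑ i, min ν (a i)) - p ^ (∑ i, min (ν - 1) (a i)) :=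
  number_of_cyclic_subgroups_p_group_general p hp r a ν hν₁
end

section
/- Let r ≥ 1 and let n₁, …, n_r, m₁, …, m_r be positive integers with gcd(n₁⋯n_r, m₁⋯m_r) = 1. Then the number of cyclic subgroups of C_{n₁m₁} × ⋯ × C_{n_rm_r} equals the product of the number of cyclic subgroups of C_{n₁} × ⋯ × C_{n_r} and the number of cyclic subgroups of C_{m₁} × ⋯ × C_{m_r}. -/
/-!
If groups `A` and `B` have coprime exponents, Bezout gives for every `(a, b)` an integer
multiple equal to `(a, 0)` and one equal to `(0, b)`. Hence every subgroup of `A × B` is the product of its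
two projections, and a product of cyclic subgroups `⟨a⟩ × ⟨b⟩` is cyclic, generated by `(a, b)`;
so the cyclic subgroups of `A × B` are exactly the pairs of cyclic subgroups. By the Chinese
remainder theorem `∏ᵢ ℤ/nᵢmᵢ ≃ ∏ᵢ ℤ/nᵢ × ∏ᵢ ℤ/mᵢ`, and the two factors have exponents dividing
`∏ᵢ nᵢ` and `∏ᵢ mᵢ`.
-/

open Finset

section CoprimeExponent

variable {A B : Type*} [AddGroup A] [AddGroup B]

theorem exists_zsmul_eq_inl_of_coprime_exponent
    (h : (AddMonoid.exponent A).Coprime (AddMonoid.exponent B)) (a : A) (b : B) :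
    ∃ k : ℤ, k • (a, b) = (a, 0) := by
  set c := AddMonoid.exponent A
  set d := AddMonoid.exponent B
  have bezout : (d : ℤ) * Nat.gcdB c d = 1 - c * Nat.gcdA c d := by
    have := Nat.gcd_eq_gcd_ab c d
    rw [h.gcd_eq_one] at this
    push_cast at this
    linarith
  refine ⟨d * Nat.gcdB c d, Prod.ext ?_ ?_⟩
  · change ((d : ℤ) * Nat.gcdB c d) • a = a
    rw [bezout, sub_zsmul, one_zsmul, mul_comm, mul_zsmul, natCast_zsmul,
      AddMonoid.exponent_nsmul_eq_zero, zsmul_zero, neg_zero, add_zero]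
  · change ((d : ℤ) * Nat.gcdB c d) • b = 0
    rw [mul_comm, mul_zsmul, natCast_zsmul, AddMonoid.exponent_nsmul_eq_zero, zsmul_zero]

theorem exists_zsmul_eq_inr_of_coprime_exponent
    (h : (AddMonoid.exponent A).Coprime (AddMonoid.exponent B)) (a : A) (b : B) :
    ∃ k : ℤ, k • (a, b) = (0, b) := by
  obtain ⟨k, hk⟩ := exists_zsmul_eq_inl_of_coprime_exponent h.symm b a
  exact ⟨k, Prod.ext (congrArg Prod.snd hk) (congrArg Prod.fst hk)⟩

theorem AddSubgroup.prod_map_fst_map_snd_of_coprime_exponent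
    (h : (AddMonoid.exponent A).Coprime (AddMonoid.exponent B)) (H : AddSubgroup (A × B)) :
    (H.map (AddMonoidHom.fst A B)).prod (H.map (AddMonoidHom.snd A B)) = H := by
  refine le_antisymm ?_ (AddSubgroup.le_prod_iff.mpr ⟨le_rfl, le_rfl⟩)
  rintro ⟨a, b⟩ ⟨⟨⟨a, b'⟩, hab', rfl⟩, ⟨⟨a', b⟩, ha'b, rfl⟩⟩
  obtain ⟨k, hk⟩ := exists_zsmul_eq_inl_of_coprime_exponent h a b'
  obtain ⟨l, hl⟩ := exists_zsmul_eq_inr_of_coprime_exponent h a' b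
  have hsum := H.add_mem (hk ▸ H.zsmul_mem hab' k) (hl ▸ H.zsmul_mem ha'b l)
  rwa [Prod.mk_add_mk, add_zero, zero_add] at hsum

theorem AddSubgroup.map_fst_prod (K : AddSubgroup A) (L : AddSubgroup B) :
    (K.prod L).map (AddMonoidHom.fst A B) = K := by
  ext a
  exact ⟨fun ⟨_, hx, hxa⟩ => hxa ▸ hx.1, fun ha => ⟨(a, 0), ⟨ha, L.zero_mem⟩, rfl⟩⟩

theorem AddSubgroup.map_snd_prod (K : AddSubgroup A) (L : AddSubgroup B) :
    (K.prod L).map (AddMonoidHom.snd A B) = L := by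
  ext b
  exact ⟨fun ⟨_, hx, hxb⟩ => hxb ▸ hx.2, fun hb => ⟨(0, b), ⟨K.zero_mem, hb⟩, rfl⟩⟩

def AddSubgroup.prodEquivOfCoprimeExponent
    (h : (AddMonoid.exponent A).Coprime (AddMonoid.exponent B)) :
    AddSubgroup (A × B) ≃ AddSubgroup A × AddSubgroup B where
  toFun H := (H.map (AddMonoidHom.fst A B), H.map (AddMonoidHom.snd A B))
  invFun KL := KL.1.prod KL.2
  left_inv := AddSubgroup.prod_map_fst_map_snd_of_coprime_exponent h
  right_inv KL := Prod.ext (KL.1.map_fst_prod KL.2) (KL.1.map_snd_prod KL.2)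

theorem AddSubgroup.isAddCyclic_map {C : Type*} [AddGroup C] (f : A →+ C) (H : AddSubgroup A)
    [IsAddCyclic H] : IsAddCyclic (H.map f) :=
  isAddCyclic_of_surjective (f.addSubgroupMap H) (f.addSubgroupMap_surjective H)

theorem AddSubgroup.isAddCyclic_prod_of_coprime_exponent
    (h : (AddMonoid.exponent A).Coprime (AddMonoid.exponent B)) (K : AddSubgroup A)
    (L : AddSubgroup B) [IsAddCyclic K] [IsAddCyclic L] : IsAddCyclic (K.prod L) := by
  obtain ⟨a, rfl⟩ := (K.isAddCyclic_iff_exists_zmultiples_eq_top).mp ‹_›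
  obtain ⟨b, rfl⟩ := (L.isAddCyclic_iff_exists_zmultiples_eq_top).mp ‹_›
  have hprod : (zmultiples a).prod (zmultiples b) = zmultiples (a, b) := by
    simpa only [AddMonoidHom.map_zmultiples, AddMonoidHom.coe_fst, AddMonoidHom.coe_snd] using
      AddSubgroup.prod_map_fst_map_snd_of_coprime_exponent h (zmultiples (a, b))
  rw [hprod]
  infer_instance

theorem AddSubgroup.isAddCyclic_iff_of_coprime_exponent
    (h : (AddMonoid.exponent A).Coprime (AddMonoid.exponent B)) (H : AddSubgroup (A × B)) :
    IsAddCyclic H ↔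
      IsAddCyclic (H.map (AddMonoidHom.fst A B)) ∧ IsAddCyclic (H.map (AddMonoidHom.snd A B)) := by
  refine ⟨fun _ => ⟨H.isAddCyclic_map _, H.isAddCyclic_map _⟩, fun ⟨_, _⟩ => ?_⟩
  rw [← AddSubgroup.prod_map_fst_map_snd_of_coprime_exponent h H]
  exact AddSubgroup.isAddCyclic_prod_of_coprime_exponent h _ _

def cyclicAddSubgroupsProdEquivOfCoprimeExponent
    (h : (AddMonoid.exponent A).Coprime (AddMonoid.exponent B)) :
    {H : AddSubgroup (A × B) // IsAddCyclic H} ≃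
      {K : AddSubgroup A // IsAddCyclic K} × {L : AddSubgroup B // IsAddCyclic L} :=
  ((AddSubgroup.prodEquivOfCoprimeExponent h).subtypeEquiv
    (AddSubgroup.isAddCyclic_iff_of_coprime_exponent h)).trans Equiv.subtypeProdEquivProd

end CoprimeExponent

def AddEquiv.cyclicAddSubgroupsCongr {G G' : Type*} [AddGroup G] [AddGroup G'] (e : G ≃+ G') :
    {H : AddSubgroup G // IsAddCyclic H} ≃ {H : AddSubgroup G' // IsAddCyclic H} :=
  e.mapAddSubgroup.toEquiv.subtypeEquiv fun H =>
    (H.equivMapOfInjective e.toAddMonoidHom e.injective).isAddCyclic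

def AddEquiv.piProd {ι : Type*} (A B : ι → Type*) [∀ i, AddGroup (A i)] [∀ i, AddGroup (B i)] :
    (∀ i, A i × B i) ≃+ (∀ i, A i) × (∀ i, B i) :=
  { Equiv.arrowProdEquivProdArrow ι A B with map_add' _ _ := rfl }

theorem AddMonoid.exponent_pi_zmod_dvd_prod {ι : Type*} [Fintype ι] (n : ι → ℕ) :
    AddMonoid.exponent (∀ i, ZMod (n i)) ∣ ∏ i, n i := by
  rw [AddMonoid.exponent_pi]
  simp only [ZMod.exponent]
  exact lcm_dvd_prod _ _

theorem cyclic_subgroup_count_multiplicative_general (r : ℕ) (n m : Fin r → ℕ)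
    (hcop : Nat.gcd (∏ i, n i) (∏ i, m i) = 1) :
    Nat.card {H : AddSubgroup (∀ i, ZMod (n i * m i)) // IsAddCyclic H} =
      Nat.card {H : AddSubgroup (∀ i, ZMod (n i)) // IsAddCyclic H} *
        Nat.card {H : AddSubgroup (∀ i, ZMod (m i)) // IsAddCyclic H} := by
  have hcop_i (i : Fin r) : (n i).Coprime (m i) :=
    Nat.Coprime.of_dvd (dvd_prod_of_mem n (mem_univ i)) (dvd_prod_of_mem m (mem_univ i)) hcop
  let crt : (∀ i, ZMod (n i * m i)) ≃+ (∀ i, ZMod (n i)) × (∀ i, ZMod (m i)) :=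
    (AddEquiv.piCongrRight fun i => (ZMod.chineseRemainder (hcop_i i)).toAddEquiv).trans
      (AddEquiv.piProd _ _)
  have hexp := Nat.Coprime.of_dvd (AddMonoid.exponent_pi_zmod_dvd_prod n)
    (AddMonoid.exponent_pi_zmod_dvd_prod m) hcop
  rw [Nat.card_congr (crt.cyclicAddSubgroupsCongr.trans
    (cyclicAddSubgroupsProdEquivOfCoprimeExponent hexp)), Nat.card_prod]

theorem cyclic_subgroup_count_multiplicative (r : ℕ) (hr : 1 ≤ r) (n m : Fin r → ℕ)
    (hn : ∀ i, 0 < n i) (hm : ∀ i, 0 < m i)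
    (hcop : Nat.gcd (∏ i, n i) (∏ i, m i) = 1) :
    Nat.card {H : AddSubgroup (∀ i, ZMod (n i * m i)) // IsAddCyclic H} =
      Nat.card {H : AddSubgroup (∀ i, ZMod (n i)) // IsAddCyclic H} *
        Nat.card {H : AddSubgroup (∀ i, ZMod (m i)) // IsAddCyclic H} :=
  cyclic_subgroup_count_multiplicative_general r n m hcop
end

section
/- Let r ≥ 1 and let n₁, …, n_r, m₁, …, m_r be positive integers with gcd(n₁⋯n_r, m₁⋯m_r) = 1. Set n = lcm(n₁, …, n_r) and m = lcm(m₁, …, m_r). Let δ ∣ nm and write δ = a·b with a ∣ n and b ∣ m (this factorization is unique). Then the number of cyclic subgroups of order δ of C_{n₁m₁} × ⋯ × C_{n_rm_r} equals the number of cyclic subgroups of order a of C_{n₁} × ⋯ × C_{n_r} times the number of cyclic subgroups of order b of C_{m₁} × ⋯ × C_{m_r}. -/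
/-! By the Chinese remainder theorem `C_{nᵢmᵢ} ≅ C_{nᵢ} × C_{mᵢ}`, so the group is `G × H` with
`G = ∏ C_{nᵢ}` and `H = ∏ C_{mᵢ}` of coprime orders. In such a product every subgroup is the
product of its two projections, and it is cyclic iff both projections are, their orders being
coprime. Since these orders divide `|G|` and `|H|` respectively, order `ab` forces them to be
`a` and `b`. -/

open Finset

theorem Nat.Coprime.mul_eq_mul_iff_of_dvd {N M x y a b : ℕ} (h : N.Coprime M)
    (hx : x ∣ N) (hy : y ∣ M) (ha : a ∣ N) (hb : b ∣ M) :
    x * y = a * b ↔ x = a ∧ y = b := by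
  have gcd_eq {u v : ℕ} (hu : u ∣ N) (hv : v ∣ M) : (u * v).gcd N = u ∧ (u * v).gcd M = v :=
    ⟨by rw [Nat.Coprime.gcd_mul_right_cancel u (h.symm.coprime_dvd_left hv), Nat.gcd_eq_left hu],
     by rw [Nat.Coprime.gcd_mul_left_cancel v (h.coprime_dvd_left hu), Nat.gcd_eq_left hv]⟩
  refine ⟨fun he => ?_, fun ⟨rfl, rfl⟩ => rfl⟩
  obtain ⟨hxN, hyM⟩ := gcd_eq hx hy
  obtain ⟨haN, hbM⟩ := gcd_eq ha hb
  exact ⟨hxN.symm.trans (he ▸ haN), hyM.symm.trans (he ▸ hbM)⟩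

def AddEquiv.arrowProdEquivProdArrow {ι : Type*} (A B : ι → Type*) [∀ i, Add (A i)]
    [∀ i, Add (B i)] :
    (∀ i, A i × B i) ≃+ (∀ i, A i) × (∀ i, B i) where
  __ := Equiv.arrowProdEquivProdArrow ι A B
  map_add' _ _ := rfl

abbrev CyclicAddSubgroupOfCard (G : Type*) [AddGroup G] (d : ℕ) : Type _ :=
  {K : AddSubgroup G // IsAddCyclic K ∧ Nat.card K = d}

namespace AddSubgroup

variable {G H : Type*} [AddGroup G] [AddGroup H]

theorem card_prod (K₁ : AddSubgroup G) (K₂ : AddSubgroup H) :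
    Nat.card (K₁.prod K₂) = Nat.card K₁ * Nat.card K₂ := by
  rw [Nat.card_congr (prodEquiv K₁ K₂).toEquiv, Nat.card_prod]

theorem map_fst_prod_s8 (K₁ : AddSubgroup G) (K₂ : AddSubgroup H) :
    (K₁.prod K₂).map (AddMonoidHom.fst G H) = K₁ := by
  ext x
  exact ⟨fun ⟨p, hp, hpx⟩ => hpx ▸ hp.1, fun hx => ⟨(x, 0), ⟨hx, K₂.zero_mem⟩, rfl⟩⟩

theorem map_snd_prod_s8 (K₁ : AddSubgroup G) (K₂ : AddSubgroup H) :
    (K₁.prod K₂).map (AddMonoidHom.snd G H) = K₂ := by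
  ext x
  exact ⟨fun ⟨p, hp, hpx⟩ => hpx ▸ hp.2, fun hx => ⟨(0, x), ⟨K₁.zero_mem, hx⟩, rfl⟩⟩

variable (hGH : (Nat.card G).Coprime (Nat.card H))
include hGH

-- `k • Nat.card H • w = (w.1, 0)` for `k` inverting `Nat.card H` modulo the order of `w.1`.
theorem mk_fst_zero_mem_of_coprime {L : AddSubgroup (G × H)} {w : G × H} (hw : w ∈ L) :
    (w.1, (0 : H)) ∈ L := by
  obtain ⟨k, hk⟩ := exists_nsmul_eq_self_of_coprime
    (hGH.symm.coprime_dvd_right (_root_.addOrderOf_dvd_natCard w.1))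
  have hw₂ : Nat.card H • w.2 = 0 := card_nsmul_eq_zero'
  have : k • Nat.card H • w ∈ L := L.nsmul_mem (L.nsmul_mem hw _) _
  have hkw : k • Nat.card H • w = (w.1, 0) := Prod.ext hk (by simp [hw₂])
  rwa [hkw] at this

theorem eq_prod_map_fst_map_snd_of_coprime (L : AddSubgroup (G × H)) :
    L = (L.map (AddMonoidHom.fst G H)).prod (L.map (AddMonoidHom.snd G H)) := by
  refine le_antisymm (le_prod_iff.mpr ⟨le_rfl, le_rfl⟩) (prod_le_iff.mpr ⟨?_, ?_⟩)
  · rintro _ ⟨_, ⟨w, hw, rfl⟩, rfl⟩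
    exact mk_fst_zero_mem_of_coprime hGH hw
  · rintro _ ⟨_, ⟨w, hw, rfl⟩, rfl⟩
    have hw₂ : ((0 : G), w.2) = w - (w.1, 0) := by ext <;> simp
    show ((0 : G), w.2) ∈ L
    exact hw₂ ▸ L.sub_mem hw (mk_fst_zero_mem_of_coprime hGH hw)

def prodEquivOfCoprime : AddSubgroup (G × H) ≃ AddSubgroup G × AddSubgroup H where
  toFun L := (L.map (AddMonoidHom.fst G H), L.map (AddMonoidHom.snd G H))
  invFun K := K.1.prod K.2
  left_inv L := (eq_prod_map_fst_map_snd_of_coprime hGH L).symm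
  right_inv K := Prod.ext (map_fst_prod_s8 K.1 K.2) (map_snd_prod_s8 K.1 K.2)

theorem isAddCyclic_prod_and_card_eq_mul_iff {K₁ : AddSubgroup G} {K₂ : AddSubgroup H} {a b : ℕ}
    (ha : a ∣ Nat.card G) (hb : b ∣ Nat.card H) :
    (IsAddCyclic (K₁.prod K₂) ∧ Nat.card (K₁.prod K₂) = a * b) ↔
      (IsAddCyclic K₁ ∧ Nat.card K₁ = a) ∧ (IsAddCyclic K₂ ∧ Nat.card K₂ = b) := by
  have hK : (Nat.card K₁).Coprime (Nat.card K₂) :=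
    (hGH.coprime_dvd_left K₁.card_addSubgroup_dvd_card).coprime_dvd_right
      K₂.card_addSubgroup_dvd_card
  rw [(prodEquiv K₁ K₂).isAddCyclic, AddGroup.isAddCyclic_prod_iff, card_prod,
    hGH.mul_eq_mul_iff_of_dvd K₁.card_addSubgroup_dvd_card K₂.card_addSubgroup_dvd_card ha hb]
  tauto

theorem card_cyclicAddSubgroupOfCard_prod {a b : ℕ} (ha : a ∣ Nat.card G) (hb : b ∣ Nat.card H) :
    Nat.card (CyclicAddSubgroupOfCard (G × H) (a * b)) =
      Nat.card (CyclicAddSubgroupOfCard G a) * Nat.card (CyclicAddSubgroupOfCard H b) := by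
  rw [← Nat.card_prod]
  exact Nat.card_congr <| ((prodEquivOfCoprime hGH).symm.subtypeEquiv fun K =>
    (isAddCyclic_prod_and_card_eq_mul_iff hGH ha hb).symm).symm.trans Equiv.subtypeProdEquivProd

end AddSubgroup

theorem AddEquiv.card_cyclicAddSubgroupOfCard {G H : Type*} [AddGroup G] [AddGroup H]
    (e : G ≃+ H) (d : ℕ) :
    Nat.card (CyclicAddSubgroupOfCard G d) = Nat.card (CyclicAddSubgroupOfCard H d) :=
  Nat.card_congr <| e.mapAddSubgroup.toEquiv.subtypeEquiv fun K => by
    rw [(e.addSubgroupMap K).isAddCyclic, Nat.card_congr (e.addSubgroupMap K).toEquiv]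
    rfl

theorem cyclic_subgroup_order_count_multiplicative_general (r : ℕ)
    (n m : Fin r → ℕ)
    (hcop : Nat.gcd (∏ i, n i) (∏ i, m i) = 1)
    (δ a b : ℕ)
    (ha : a ∣ Finset.univ.lcm n) (hb : b ∣ Finset.univ.lcm m) (hab : δ = a * b) :
    Nat.card {H : AddSubgroup (∀ i, ZMod (n i * m i)) //
        IsAddCyclic H ∧ Nat.card H = δ} =
      Nat.card {H : AddSubgroup (∀ i, ZMod (n i)) //
          IsAddCyclic H ∧ Nat.card H = a} *
        Nat.card {H : AddSubgroup (∀ i, ZMod (m i)) //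
          IsAddCyclic H ∧ Nat.card H = b} := by
  have card_pi (k : Fin r → ℕ) : Nat.card (∀ i, ZMod (k i)) = ∏ i, k i := by
    simp only [Nat.card_pi, Nat.card_zmod]
  have lcm_dvd_prod (k : Fin r → ℕ) : univ.lcm k ∣ ∏ i, k i :=
    Finset.lcm_dvd fun i hi => Finset.dvd_prod_of_mem k hi
  have hcop_i (i : Fin r) : (n i).Coprime (m i) :=
    Nat.Coprime.coprime_dvd_left (dvd_prod_of_mem n (mem_univ i))
      (Nat.Coprime.coprime_dvd_right (dvd_prod_of_mem m (mem_univ i)) hcop)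
  let crt : (∀ i, ZMod (n i * m i)) ≃+ (∀ i, ZMod (n i)) × (∀ i, ZMod (m i)) :=
    (AddEquiv.piCongrRight fun i => (ZMod.chineseRemainder (hcop_i i)).toAddEquiv).trans
      (AddEquiv.arrowProdEquivProdArrow _ _)
  subst hab
  rw [crt.card_cyclicAddSubgroupOfCard]
  apply AddSubgroup.card_cyclicAddSubgroupOfCard_prod
  · rwa [card_pi, card_pi]
  · rw [card_pi]; exact ha.trans (lcm_dvd_prod n)
  · rw [card_pi]; exact hb.trans (lcm_dvd_prod m)

theorem cyclic_subgroup_order_count_multiplicative (r : ℕ) (hr : 1 ≤ r)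
    (n m : Fin r → ℕ) (hn : ∀ i, 0 < n i) (hm : ∀ i, 0 < m i)
    (hcop : Nat.gcd (∏ i, n i) (∏ i, m i) = 1)
    (δ a b : ℕ) (hδ : δ ∣ Finset.univ.lcm n * Finset.univ.lcm m)
    (ha : a ∣ Finset.univ.lcm n) (hb : b ∣ Finset.univ.lcm m) (hab : δ = a * b) :
    Nat.card {H : AddSubgroup (∀ i, ZMod (n i * m i)) //
        IsAddCyclic H ∧ Nat.card H = δ} =
      Nat.card {H : AddSubgroup (∀ i, ZMod (n i)) //
          IsAddCyclic H ∧ Nat.card H = a} *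
        Nat.card {H : AddSubgroup (∀ i, ZMod (m i)) //
          IsAddCyclic H ∧ Nat.card H = b} :=
  cyclic_subgroup_order_count_multiplicative_general r n m hcop δ a b ha hb hab
end

section
/- Let r ≥ 1, let n be a positive integer, and let δ be a positive divisor of n. The number of cyclic subgroups of order δ of the direct product C_n × ⋯ × C_n of r copies of C_n equals φ_r(δ)/φ(δ), where φ_r is the Jordan totient function of order r and φ is Euler's totient function. Equivalently, φ(δ) times the number of cyclic subgroups of order δ equals φ_r(δ). -/
/-!
Each element of order δ generates a cyclic subgroup of order δ, and such a subgroup has exactly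
φ(δ) generators; so φ(δ) times the number of these subgroups is the number of elements of
order δ. Summing the latter over the divisors of m counts the m-torsion of (ℤ/n)^r, which has m^r elements
when m ∣ n, and Möbius inversion turns this into the Jordan totient φ_r(δ).
-/

open Finset

namespace AddSubgroup

variable {G : Type*} [AddGroup G]

theorem zmultiples_eq_iff_s11 {H : AddSubgroup G} [Finite H] {x : G} :
    zmultiples x = H ↔ x ∈ H ∧ addOrderOf x = Nat.card H := by
  constructor
  · rintro rfl
    exact ⟨mem_zmultiples x, (Nat.card_zmultiples x).symm⟩
  · rintro ⟨hxH, hx⟩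
    exact eq_of_le_of_card_ge (zmultiples_le.mpr hxH) (by rw [Nat.card_zmultiples, hx])

theorem card_zmultiples_eq (H : AddSubgroup G) [IsAddCyclic H] [Finite H] :
    Nat.card {x : G // zmultiples x = H} = Nat.totient (Nat.card H) := by
  classical
  have : Fintype H := Fintype.ofFinite H
  calc Nat.card {x : G // zmultiples x = H}
      = Nat.card {x : G // x ∈ H ∧ addOrderOf x = Nat.card H} :=
        Nat.card_congr (Equiv.subtypeEquivRight fun _ => zmultiples_eq_iff_s11)
    _ = Nat.card {y : H // addOrderOf y = Nat.card H} := by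
        rw [← Nat.card_congr (Equiv.subtypeSubtypeEquivSubtypeInter (· ∈ H) _)]
        simp only [addOrderOf_coe]
    _ = Nat.totient (Nat.card H) := by
        rw [Nat.card_eq_fintype_card, Fintype.card_subtype, Nat.card_eq_fintype_card]
        exact IsAddCyclic.card_addOrderOf_eq_totient dvd_rfl

end AddSubgroup

theorem card_addOrderOf_eq_totient_mul_card_cyclic_addSubgroups {G : Type*} [AddGroup G]
    [Finite G] (δ : ℕ) :
    Nat.card {x : G // addOrderOf x = δ} =
      Nat.totient δ * Nat.card {H : AddSubgroup G // IsAddCyclic H ∧ Nat.card H = δ} := by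
  let S := {H : AddSubgroup G // IsAddCyclic H ∧ Nat.card H = δ}
  have : Fintype S := Fintype.ofFinite S
  let e : {x : G // addOrderOf x = δ} ≃ Σ H : S, {x : G // AddSubgroup.zmultiples x = H.1} :=
    { toFun := fun x => ⟨⟨_, inferInstance, (Nat.card_zmultiples x.1).trans x.2⟩, x.1, rfl⟩
      invFun := fun p => ⟨p.2.1, by rw [← Nat.card_zmultiples, p.2.2, p.1.2.2]⟩
      left_inv := fun _ => rfl
      right_inv := by
        rintro ⟨⟨H, hH⟩, x, hx⟩
        obtain rfl : AddSubgroup.zmultiples x = H := hx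
        rfl }
  rw [Nat.card_congr e, Nat.card_sigma]
  have hfiber (H : S) : Nat.card {x : G // AddSubgroup.zmultiples x = H.1} = Nat.totient δ := by
    have := H.2.1
    rw [AddSubgroup.card_zmultiples_eq, H.2.2]
  rw [sum_congr rfl fun H _ => hfiber H, sum_const, card_univ, ← Nat.card_eq_fintype_card,
    smul_eq_mul, mul_comm]

theorem IsAddCyclic.card_nsmul_eq_zero_of_dvd {α : Type*} [AddGroup α] [Fintype α]
    [DecidableEq α] [IsAddCyclic α] {m : ℕ} (hm : m ∣ Fintype.card α) :
    #{x : α | m • x = 0} = m := by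
  have hm0 : m ≠ 0 := ne_zero_of_dvd_ne_zero Fintype.card_ne_zero hm
  calc #{x : α | m • x = 0}
      = ∑ d ∈ m.divisors, #{x : α | addOrderOf x = d} :=
        (sum_card_addOrderOf_eq_card_nsmul_eq_zero hm0).symm
    _ = ∑ d ∈ m.divisors, Nat.totient d := sum_congr rfl fun d hd =>
        IsAddCyclic.card_addOrderOf_eq_totient ((Nat.dvd_of_mem_divisors hd).trans hm)
    _ = m := Nat.sum_totient m

theorem card_pi_nsmul_eq_zero_s11 {ι A : Type*} [Fintype ι] [DecidableEq ι] [AddMonoid A] [Fintype A]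
    [DecidableEq A] (m : ℕ) :
    #{x : ι → A | m • x = 0} = #{y : A | m • y = 0} ^ Fintype.card ι := by
  have : ({x : ι → A | m • x = 0} : Finset _) =
      Fintype.piFinset fun _ => {y : A | m • y = 0} := by
    ext x
    simp [funext_iff]
  rw [this, Fintype.card_piFinset, prod_const, card_univ]

theorem card_addOrderOf_eq_sum_moebius {G : Type*} [AddGroup G] [Fintype G] [DecidableEq G]
    {δ : ℕ} (hδ : 0 < δ) :
    (#{x : G | addOrderOf x = δ} : ℤ) =
      ∑ e ∈ δ.divisors, (#{x : G | e • x = 0} : ℤ) * ArithmeticFunction.moebius (δ / e) := by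
  have hinv := (ArithmeticFunction.sum_eq_iff_sum_smul_moebius_eq (R := ℤ)
    (f := fun d => #{x : G | addOrderOf x = d}) (g := fun m => #{x : G | m • x = 0})).mp
    (fun m hm => by exact_mod_cast sum_card_addOrderOf_eq_card_nsmul_eq_zero (G := G) hm.ne') δ hδ
  rw [← hinv, Nat.sum_divisorsAntidiagonal' fun a b =>
    ArithmeticFunction.moebius a • (#{x : G | b • x = 0} : ℤ)]
  exact sum_congr rfl fun _ _ => mul_comm _ _

theorem number_of_cyclic_subgroups_of_order_eq_jordan_div_totient_general (r : ℕ)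
    (n : ℕ) (hn : 0 < n) (δ : ℕ) (hδ : 0 < δ) (hδn : δ ∣ n) :
    (Nat.totient δ : ℤ) *
        Nat.card {H : AddSubgroup (Fin r → ZMod n) //
          IsAddCyclic H ∧ Nat.card H = δ} =
      ∑ e ∈ δ.divisors, (e : ℤ) ^ r * ArithmeticFunction.moebius (δ / e) := by
  classical
  have : NeZero n := ⟨hn.ne'⟩
  have htorsion (e : ℕ) (he : e ∈ δ.divisors) : #{x : Fin r → ZMod n | e • x = 0} = e ^ r := by
    have he_dvd : e ∣ Fintype.card (ZMod n) := by
      rw [ZMod.card]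
      exact (Nat.dvd_of_mem_divisors he).trans hδn
    rw [card_pi_nsmul_eq_zero_s11, IsAddCyclic.card_nsmul_eq_zero_of_dvd he_dvd, Fintype.card_fin]
  rw [← Nat.cast_mul, ← card_addOrderOf_eq_totient_mul_card_cyclic_addSubgroups,
    Nat.card_eq_fintype_card, Fintype.card_subtype, card_addOrderOf_eq_sum_moebius hδ]
  refine sum_congr rfl fun e he => ?_
  rw [htorsion e he, Nat.cast_pow]

theorem number_of_cyclic_subgroups_of_order_eq_jordan_div_totient (r : ℕ) (hr : 1 ≤ r)
    (n : ℕ) (hn : 0 < n) (δ : ℕ) (hδ : 0 < δ) (hδn : δ ∣ n) :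
    (Nat.totient δ : ℤ) *
        Nat.card {H : AddSubgroup (Fin r → ZMod n) //
          IsAddCyclic H ∧ Nat.card H = δ} =
      ∑ e ∈ δ.divisors, (e : ℤ) ^ r * ArithmeticFunction.moebius (δ / e) :=
  number_of_cyclic_subgroups_of_order_eq_jordan_div_totient_general r n hn δ hδ hδn
end

section
/- For every r ≥ 1 and every positive integer δ, the sum of φ(d₁)⋯φ(d_r), taken over all ordered r-tuples (d₁, …, d_r) of positive integers with lcm(d₁, …, d_r) = δ, equals the Jordan totient φ_r(δ). -/
/-! Grouping the `r`-tuples of divisors of `n` according to their lcm `e ∣ n` gives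
`∑_{e ∣ n} F(e) = (∑_{d ∣ n} φ d)^r = n^r`, where `F(e)` is the left-hand side at `e`;
Möbius inversion then yields `F(δ) = ∑_{e ∣ δ} e^r μ(δ/e) = φ_r(δ)`. -/

open Finset

namespace Nat

def lcmTupleSum {R : Type*} [CommSemiring R] (f : ℕ → R) (r n : ℕ) : R :=
  ∑ d ∈ (Fintype.piFinset fun _ : Fin r => n.divisors) with univ.lcm d = n, ∏ i, f (d i)

theorem filter_piFinset_divisors_lcm_eq {r e n : ℕ} (he : e ∣ n) (hn : n ≠ 0) :
    {d ∈ Fintype.piFinset (fun _ : Fin r => e.divisors) | univ.lcm d = e} =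
      {d ∈ Fintype.piFinset (fun _ : Fin r => n.divisors) | univ.lcm d = e} := by
  ext d
  simp only [mem_filter, Fintype.mem_piFinset, mem_divisors]
  constructor
  · rintro ⟨hd, rfl⟩
    exact ⟨fun i => ⟨(hd i).1.trans he, hn⟩, rfl⟩
  · rintro ⟨-, rfl⟩
    exact ⟨fun i => ⟨dvd_lcm (mem_univ i), ne_zero_of_dvd_ne_zero hn he⟩, rfl⟩

theorem sum_divisors_lcmTupleSum {R : Type*} [CommSemiring R] (f : ℕ → R) (r : ℕ)
    {n : ℕ} (hn : n ≠ 0) :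
    ∑ e ∈ n.divisors, lcmTupleSum f r e = (∑ d ∈ n.divisors, f d) ^ r := by
  have lcm_mem : ∀ d ∈ Fintype.piFinset (fun _ : Fin r => n.divisors), univ.lcm d ∈ n.divisors :=
    fun d hd => mem_divisors.2
      ⟨Finset.lcm_dvd fun i _ => dvd_of_mem_divisors (Fintype.mem_piFinset.1 hd i), hn⟩
  calc ∑ e ∈ n.divisors, lcmTupleSum f r e
      = ∑ e ∈ n.divisors, ∑ d ∈ (Fintype.piFinset fun _ : Fin r => n.divisors)
          with univ.lcm d = e, ∏ i, f (d i) :=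
        sum_congr rfl fun e he => by
          rw [lcmTupleSum, filter_piFinset_divisors_lcm_eq (dvd_of_mem_divisors he) hn]
    _ = ∑ d ∈ Fintype.piFinset (fun _ : Fin r => n.divisors), ∏ i, f (d i) :=
        sum_fiberwise_of_maps_to lcm_mem _
    _ = (∑ d ∈ n.divisors, f d) ^ r := by
        rw [← prod_univ_sum, prod_const, Finset.card_univ, Fintype.card_fin]

theorem sum_divisors_lcmTupleSum_totient (r : ℕ) {n : ℕ} (hn : n ≠ 0) :
    ∑ e ∈ n.divisors, lcmTupleSum (fun d => (φ d : ℤ)) r e = (n : ℤ) ^ r := by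
  rw [sum_divisors_lcmTupleSum _ _ hn]
  exact_mod_cast congrArg (· ^ r) (sum_totient n)

end Nat

theorem von_sterneck_eq_jordan_totient_general (r : ℕ) (δ : ℕ) (hδ : 0 < δ) :
    (∑ d ∈ (Fintype.piFinset (fun _ : Fin r => δ.divisors)).filter
        (fun d => Finset.univ.lcm d = δ),
      ∏ i, (Nat.totient (d i) : ℤ)) =
      ∑ e ∈ δ.divisors, (e : ℤ) ^ r * ArithmeticFunction.moebius (δ / e) := by
  have inversion := (ArithmeticFunction.sum_eq_iff_sum_smul_moebius_eq
    (f := Nat.lcmTupleSum (fun d => (Nat.totient d : ℤ)) r) (g := fun n => (n : ℤ) ^ r)).1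
    (fun n hn => Nat.sum_divisors_lcmTupleSum_totient r hn.ne') δ hδ
  rw [Nat.sum_divisorsAntidiagonal' (fun a b => ArithmeticFunction.moebius a • (b : ℤ) ^ r)]
    at inversion
  simp only [smul_eq_mul, mul_comm] at inversion
  exact inversion.symm

theorem von_sterneck_eq_jordan_totient (r : ℕ) (hr : 1 ≤ r) (δ : ℕ) (hδ : 0 < δ) :
    (∑ d ∈ (Fintype.piFinset (fun _ : Fin r => δ.divisors)).filter
        (fun d => Finset.univ.lcm d = δ),
      ∏ i, (Nat.totient (d i) : ℤ)) =
      ∑ e ∈ δ.divisors, (e : ℤ) ^ r * ArithmeticFunction.moebius (δ / e) :=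
  von_sterneck_eq_jordan_totient_general r δ hδ
end

section
/- Let n₁, n₂ be positive integers. The total number of subgroups of C_{n₁} × C_{n₂} equals the sum, over all pairs (d₁, d₂) with d₁ ∣ n₁ and d₂ ∣ n₂, of gcd(d₁, d₂). -/
/-!
A subgroup `H` of `G₁ × G₂` is the graph of a homomorphism `B → G₁ ⧸ A`, where
`A = {x | (x, 0) ∈ H}` and `B` is the projection of `H` to `G₂`; conversely every such triple
`(A, B, f)` arises from exactly one `H`. For cyclic groups of orders `n₁, n₂`, the subgroups `A`
and `B` are determined by the index `d₁ ∣ n₁` of `A` and the order `d₂ ∣ n₂` of `B`, and a cyclic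
group of order `d₂` has `gcd d₁ d₂` homomorphisms into `G₁ ⧸ A`, which is cyclic of order `d₁`.
-/

open Finset

namespace AddSubgroup

variable {G₁ G₂ : Type*} [AddCommGroup G₁] [AddGroup G₂]

def graphOfQuotientHom (A : AddSubgroup G₁) (B : AddSubgroup G₂) (f : B →+ G₁ ⧸ A) :
    AddSubgroup (G₁ × G₂) :=
  (((QuotientAddGroup.mk' A).comp (AddMonoidHom.fst G₁ B)).eqLocus
    (f.comp (AddMonoidHom.snd G₁ B))).map ((AddMonoidHom.id G₁).prodMap B.subtype)

theorem mem_graphOfQuotientHom {A : AddSubgroup G₁} {B : AddSubgroup G₂} {f : B →+ G₁ ⧸ A}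
    {x : G₁} {y : G₂} :
    (x, y) ∈ graphOfQuotientHom A B f ↔ ∃ hy : y ∈ B, (x : G₁ ⧸ A) = f ⟨y, hy⟩ := by
  simp only [graphOfQuotientHom, mem_map, AddMonoidHom.coe_prodMap, AddMonoidHom.coe_id,
    coe_subtype, Prod.exists, Prod.map_apply, id_eq, Prod.mk.injEq, Subtype.exists,
    exists_and_right, exists_eq_right_right, exists_eq_right]
  exact Iff.rfl

theorem goursatFst_graphOfQuotientHom (A : AddSubgroup G₁) (B : AddSubgroup G₂)
    (f : B →+ G₁ ⧸ A) : (graphOfQuotientHom A B f).goursatFst = A := by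
  ext x
  simp [mem_graphOfQuotientHom, show (⟨0, B.zero_mem⟩ : B) = 0 from rfl]

theorem map_snd_graphOfQuotientHom (A : AddSubgroup G₁) (B : AddSubgroup G₂)
    (f : B →+ G₁ ⧸ A) : (graphOfQuotientHom A B f).map (AddMonoidHom.snd G₁ G₂) = B := by
  ext y
  simp only [mem_map, AddMonoidHom.coe_snd, Prod.exists, exists_eq_right, mem_graphOfQuotientHom]
  refine ⟨fun ⟨_, hy, _⟩ => hy, fun hy => ?_⟩
  obtain ⟨x, hx⟩ := QuotientAddGroup.mk_surjective (f ⟨y, hy⟩)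
  exact ⟨x, hy, hx⟩

theorem graphOfQuotientHom_injective :
    Function.Injective fun s : Σ (A : AddSubgroup G₁) (B : AddSubgroup G₂), B →+ G₁ ⧸ A =>
      graphOfQuotientHom s.1 s.2.1 s.2.2 := by
  rintro ⟨A, B, f⟩ ⟨A', B', f'⟩ h
  dsimp only at h
  obtain rfl : A = A' := by
    simpa only [goursatFst_graphOfQuotientHom] using congrArg goursatFst h
  obtain rfl : B = B' := by
    simpa only [map_snd_graphOfQuotientHom] using congrArg (map (AddMonoidHom.snd G₁ G₂)) h
  obtain rfl : f = f' := by
    ext ⟨y, hy⟩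
    obtain ⟨x, hx⟩ := QuotientAddGroup.mk_surjective (f ⟨y, hy⟩)
    have hmem : (x, y) ∈ graphOfQuotientHom A B f := mem_graphOfQuotientHom.mpr ⟨hy, hx⟩
    rw [h, mem_graphOfQuotientHom] at hmem
    obtain ⟨_, hx'⟩ := hmem
    rwa [← hx]
  rfl

theorem exists_graphOfQuotientHom_eq (H : AddSubgroup (G₁ × G₂)) :
    ∃ f : H.map (AddMonoidHom.snd G₁ G₂) →+ G₁ ⧸ H.goursatFst,
      graphOfQuotientHom _ _ f = H := by
  -- `f` is induced by `(x, y) ↦ x mod A` on `H`, whose kernel contains that of `(x, y) ↦ y`.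
  let π := (AddMonoidHom.snd G₁ G₂).addSubgroupMap H
  have hπ : Function.Surjective π := (AddMonoidHom.snd G₁ G₂).addSubgroupMap_surjective H
  let g : H →+ G₁ ⧸ H.goursatFst :=
    (QuotientAddGroup.mk' _).comp ((AddMonoidHom.fst G₁ G₂).comp H.subtype)
  have hker : π.ker ≤ g.ker := by
    rintro ⟨⟨x, y⟩, hxy⟩ h
    obtain rfl : y = 0 := congrArg Subtype.val h
    simpa [g] using hxy
  let f := π.liftOfSurjective hπ ⟨g, hker⟩
  have hf : ∀ p : H, f (π p) = ((p : G₁ × G₂).1 : G₁ ⧸ H.goursatFst) :=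
    π.liftOfRightInverse_comp_apply _ _ ⟨g, hker⟩
  refine ⟨f, ?_⟩
  ext ⟨x, y⟩
  rw [mem_graphOfQuotientHom]
  constructor
  · rintro ⟨hy, hx⟩
    obtain ⟨⟨⟨x', y'⟩, hxy'⟩, hp⟩ := hπ ⟨y, hy⟩
    obtain rfl : y' = y := congrArg Subtype.val hp
    rw [← hp, hf, QuotientAddGroup.eq, mem_goursatFst] at hx
    simpa using sub_mem hxy' hx
  · intro hxy
    exact ⟨_, (hf ⟨(x, y), hxy⟩).symm⟩

noncomputable def equivSigmaQuotientHom :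
    AddSubgroup (G₁ × G₂) ≃ Σ (A : AddSubgroup G₁) (B : AddSubgroup G₂), B →+ G₁ ⧸ A :=
  (Equiv.ofBijective _ ⟨graphOfQuotientHom_injective, fun H =>
    let ⟨f, hf⟩ := exists_graphOfQuotientHom_eq H
    ⟨⟨_, _, f⟩, hf⟩⟩).symm

end AddSubgroup

namespace IsAddCyclic

theorem card_addMonoidHom (M N : Type*) [AddGroup M] [AddCommGroup N] [IsAddCyclic M]
    [IsAddCyclic N] [Finite N] :
    Nat.card (M →+ N) = Nat.gcd (Nat.card M) (Nat.card N) := by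
  set m := Nat.card M
  -- A homomorphism out of `ZMod m` is the choice of an image of `1` killed by `m`.
  have e : (M →+ N) ≃ (nsmulAddMonoidHom m : N →+ N).ker :=
    calc (M →+ N) ≃ (ZMod m →+ N) :=
          (zmodAddCyclicAddEquiv inferInstance).addMonoidHomCongrLeftEquiv.symm
      _ ≃ {f : ℤ →+ N // f m = 0} := (ZMod.lift m).symm
      _ ≃ {y : N // (m : ℤ) • y = 0} := ((zmultiplesHom N).subtypeEquiv fun y => by simp).symm
      _ ≃ _ := Equiv.subtypeEquivRight fun y => by simp
  rw [Nat.card_congr e, card_nsmulAddMonoidHom_ker, Nat.gcd_comm]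

section

variable {G : Type*} [AddCommGroup G] [IsAddCyclic G] [Finite G]

theorem card_nsmulAddMonoidHom_ker_of_dvd {d : ℕ} (hd : d ∣ Nat.card G) :
    Nat.card (nsmulAddMonoidHom d : G →+ G).ker = d := by
  rw [card_nsmulAddMonoidHom_ker, Nat.gcd_eq_right hd]

theorem eq_nsmulAddMonoidHom_card_ker (H : AddSubgroup G) :
    H = (nsmulAddMonoidHom (Nat.card H) : G →+ G).ker := by
  refine AddSubgroup.eq_of_le_of_card_ge (fun x hx => ?_) ?_
  · exact congrArg Subtype.val (card_nsmul_eq_zero' (x := (⟨x, hx⟩ : H)))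
  · rw [card_nsmulAddMonoidHom_ker_of_dvd H.card_addSubgroup_dvd_card]

theorem sum_addSubgroup_card_eq_sum_divisors [Fintype (AddSubgroup G)] {M : Type*}
    [AddCommMonoid M] (g : ℕ → M) :
    ∑ H : AddSubgroup G, g (Nat.card H) = ∑ d ∈ (Nat.card G).divisors, g d := by
  refine sum_nbij' (fun H => Nat.card H) (fun d => (nsmulAddMonoidHom d : G →+ G).ker)
    (fun H _ => ?_) (fun _ _ => mem_univ _) (fun H _ => (eq_nsmulAddMonoidHom_card_ker H).symm)
    (fun d hd => card_nsmulAddMonoidHom_ker_of_dvd (Nat.dvd_of_mem_divisors hd)) (fun _ _ => rfl)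
  exact Nat.mem_divisors.mpr ⟨H.card_addSubgroup_dvd_card, Nat.card_pos.ne'⟩

theorem sum_addSubgroup_index_eq_sum_divisors [Fintype (AddSubgroup G)] {M : Type*}
    [AddCommMonoid M] (g : ℕ → M) :
    ∑ H : AddSubgroup G, g H.index = ∑ d ∈ (Nat.card G).divisors, g d := by
  have hindex (H : AddSubgroup G) : H.index = Nat.card G / Nat.card H :=
    Nat.eq_div_of_mul_eq_right Nat.card_pos.ne' H.card_mul_index
  simp only [hindex, sum_addSubgroup_card_eq_sum_divisors fun d => g (Nat.card G / d),
    Nat.sum_div_divisors]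

end

theorem card_addSubgroup_prod (G₁ G₂ : Type*) [AddCommGroup G₁] [AddCommGroup G₂]
    [IsAddCyclic G₁] [IsAddCyclic G₂] [Finite G₁] [Finite G₂] :
    Nat.card (AddSubgroup (G₁ × G₂)) =
      ∑ d₁ ∈ (Nat.card G₁).divisors, ∑ d₂ ∈ (Nat.card G₂).divisors, Nat.gcd d₁ d₂ := by
  have := Fintype.ofFinite (AddSubgroup G₁)
  have := Fintype.ofFinite (AddSubgroup G₂)
  have (A : AddSubgroup G₁) (B : AddSubgroup G₂) : Finite (B →+ G₁ ⧸ A) := FunLike.finite _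
  have (A : AddSubgroup G₁) : IsAddCyclic (G₁ ⧸ A) :=
    isAddCyclic_of_surjective _ (QuotientAddGroup.mk'_surjective A)
  calc Nat.card (AddSubgroup (G₁ × G₂))
      = ∑ A : AddSubgroup G₁, ∑ B : AddSubgroup G₂, Nat.card (B →+ G₁ ⧸ A) := by
        simp only [Nat.card_congr AddSubgroup.equivSigmaQuotientHom, Nat.card_sigma]
    _ = ∑ A : AddSubgroup G₁, ∑ B : AddSubgroup G₂, Nat.gcd A.index (Nat.card B) := by
        simp only [card_addMonoidHom, ← AddSubgroup.index_eq_card, Nat.gcd_comm]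
    _ = _ := by
        simp only [sum_addSubgroup_card_eq_sum_divisors]
        exact sum_addSubgroup_index_eq_sum_divisors
          fun d₁ => ∑ d₂ ∈ (Nat.card G₂).divisors, Nat.gcd d₁ d₂

end IsAddCyclic

theorem number_of_subgroups_two (n₁ n₂ : ℕ) (h₁ : 0 < n₁) (h₂ : 0 < n₂) :
    Nat.card (AddSubgroup (ZMod n₁ × ZMod n₂)) =
      ∑ d₁ ∈ n₁.divisors, ∑ d₂ ∈ n₂.divisors, Nat.gcd d₁ d₂ := by
  have : NeZero n₁ := ⟨h₁.ne'⟩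
  have : NeZero n₂ := ⟨h₂.ne'⟩
  simpa only [Nat.card_zmod] using IsAddCyclic.card_addSubgroup_prod (ZMod n₁) (ZMod n₂)
end

section
/- Let r ≥ 1 and let n₁, …, n_r, m₁, …, m_r be positive integers with gcd(n₁⋯n_r, m₁⋯m_r) = 1. Then the sum of the orders of the elements of C_{n₁m₁} × ⋯ × C_{n_rm_r} equals the product of the sum of the orders of the elements of C_{n₁} × ⋯ × C_{n_r} and the sum of the orders of the elements of C_{m₁} × ⋯ × C_{m_r}; consequently the arithmetic mean A of element orders satisfies A(n₁m₁, …, n_rm_r) = A(n₁, …, n_r)·A(m₁, …, m_r). -/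
/-!
Coordinatewise Chinese remaindering identifies `∏ C_{nᵢmᵢ}` with `(∏ C_{nᵢ}) × (∏ C_{mᵢ})`.
Orders in the two factors divide the coprime numbers `∏ nᵢ` and `∏ mᵢ`, so the order of a pair,
the lcm of the orders of its components, is their product, and the sum over pairs factors.
-/

open Finset

section SumAddOrderOf

variable {G A B : Type*} [AddGroup G] [AddGroup A] [AddGroup B] [Fintype G] [Fintype A]
  [Fintype B]

theorem AddEquiv.sum_addOrderOf_eq (e : G ≃+ A) :
    ∑ g : G, addOrderOf g = ∑ a : A, addOrderOf a :=
  Fintype.sum_equiv e.toEquiv _ _ fun g => e.addOrderOf_eq g |>.symm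

theorem sum_addOrderOf_prod_of_coprime (h : (Nat.card A).Coprime (Nat.card B)) :
    ∑ p : A × B, addOrderOf p = (∑ a : A, addOrderOf a) * ∑ b : B, addOrderOf b := by
  rw [sum_mul_sum, Fintype.sum_prod_type]
  refine sum_congr rfl fun a _ => sum_congr rfl fun b _ => ?_
  have hab : (addOrderOf a).Coprime (addOrderOf b) :=
    (h.coprime_dvd_left (addOrderOf_dvd_natCard a)).coprime_dvd_right (addOrderOf_dvd_natCard b)
  rw [Prod.addOrderOf, hab.lcm_eq_mul]

theorem sum_addOrderOf_eq_mul_of_addEquiv_prod (e : G ≃+ A × B)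
    (h : (Nat.card A).Coprime (Nat.card B)) :
    ∑ g : G, addOrderOf g = (∑ a : A, addOrderOf a) * ∑ b : B, addOrderOf b :=
  e.sum_addOrderOf_eq.trans (sum_addOrderOf_prod_of_coprime h)

theorem mean_addOrderOf_eq_mul_of_addEquiv_prod (e : G ≃+ A × B)
    (h : (Nat.card A).Coprime (Nat.card B)) :
    (∑ g : G, addOrderOf g : ℚ) / Nat.card G =
      ((∑ a : A, addOrderOf a : ℚ) / Nat.card A) * ((∑ b : B, addOrderOf b : ℚ) / Nat.card B) := by
  have hsum : (∑ g : G, addOrderOf g : ℚ) =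
      (∑ a : A, addOrderOf a : ℚ) * ∑ b : B, (addOrderOf b : ℚ) := by
    exact_mod_cast sum_addOrderOf_eq_mul_of_addEquiv_prod e h
  rw [div_mul_div_comm, ← hsum, Nat.card_congr e.toEquiv, Nat.card_prod, Nat.cast_mul]

end SumAddOrderOf

def ZMod.piChineseRemainder {ι : Type*} {n m : ι → ℕ} (h : ∀ i, (n i).Coprime (m i)) :
    (∀ i, ZMod (n i * m i)) ≃+ (∀ i, ZMod (n i)) × (∀ i, ZMod (m i)) :=
  (AddEquiv.piCongrRight fun i => (ZMod.chineseRemainder (h i)).toAddEquiv).trans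
    (AddEquiv.mk' (Equiv.arrowProdEquivProdArrow _ _ _) fun _ _ => rfl)

theorem Nat.card_pi_zmod {ι : Type*} [Fintype ι] (n : ι → ℕ) :
    Nat.card (∀ i, ZMod (n i)) = ∏ i, n i := by
  simp only [Nat.card_pi, Nat.card_zmod]

theorem sum_of_orders_multiplicative_general (r : ℕ) (n m : Fin r → ℕ)
    [∀ i, NeZero (n i)] [∀ i, NeZero (m i)]
    (hcop : Nat.gcd (∏ i, n i) (∏ i, m i) = 1) :
    (∑ x : ∀ i, ZMod (n i * m i), addOrderOf x) =
        (∑ x : ∀ i, ZMod (n i), addOrderOf x) *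
          (∑ x : ∀ i, ZMod (m i), addOrderOf x) ∧
      ((∑ x : ∀ i, ZMod (n i * m i), addOrderOf x : ℚ) /
          Nat.card (∀ i, ZMod (n i * m i))) =
        ((∑ x : ∀ i, ZMod (n i), addOrderOf x : ℚ) / Nat.card (∀ i, ZMod (n i))) *
          ((∑ x : ∀ i, ZMod (m i), addOrderOf x : ℚ) / Nat.card (∀ i, ZMod (m i))) := by
  have hcopi : ∀ i, (n i).Coprime (m i) := fun i =>
    (Nat.Coprime.coprime_dvd_right (dvd_prod_of_mem m (mem_univ i)) hcop).coprime_dvd_left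
      (dvd_prod_of_mem n (mem_univ i))
  have hcard : (Nat.card (∀ i, ZMod (n i))).Coprime (Nat.card (∀ i, ZMod (m i))) := by
    rwa [Nat.card_pi_zmod, Nat.card_pi_zmod]
  exact ⟨sum_addOrderOf_eq_mul_of_addEquiv_prod (ZMod.piChineseRemainder hcopi) hcard,
    mean_addOrderOf_eq_mul_of_addEquiv_prod (ZMod.piChineseRemainder hcopi) hcard⟩

theorem sum_of_orders_multiplicative (r : ℕ) (hr : 1 ≤ r) (n m : Fin r → ℕ)
    [∀ i, NeZero (n i)] [∀ i, NeZero (m i)]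
    (hcop : Nat.gcd (∏ i, n i) (∏ i, m i) = 1) :
    (∑ x : ∀ i, ZMod (n i * m i), addOrderOf x) =
        (∑ x : ∀ i, ZMod (n i), addOrderOf x) *
          (∑ x : ∀ i, ZMod (m i), addOrderOf x) ∧
      ((∑ x : ∀ i, ZMod (n i * m i), addOrderOf x : ℚ) /
          Nat.card (∀ i, ZMod (n i * m i))) =
        ((∑ x : ∀ i, ZMod (n i), addOrderOf x : ℚ) / Nat.card (∀ i, ZMod (n i))) *
          ((∑ x : ∀ i, ZMod (m i), addOrderOf x : ℚ) / Nat.card (∀ i, ZMod (m i))) :=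
  sum_of_orders_multiplicative_general r n m hcop
end
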